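/- Let B_a ⊂ ℝ^d be the ball of radius a, τ > 0, and let h_a ∈ H²(B_a) be the radial function solving Δ²h_a − τΔh_a = 0 in B_a with h_a = 0, ∂_n h_a = 1 on ∂B_a, given by h_a(r) = (1/√τ)[ (I_ν(r√τ)/I_{ν+1}(a√τ)) (r/a)^{-ν} − I_ν(a√τ)/I_{ν+1}(a√τ) ]. Then ∫_{B_a} h_a = a^d (|B_1|/√τ)( d/(a√τ) − I_ν(a√τ)/I_{ν+1}(a√τ) ), and this quantity is negative. -/

import Mathlib

open MeasureTheory Real Metric Set

noncomputable section

/-- Euclidean space ℝ^d. -/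
abbrev Euc (d : ℕ) := EuclideanSpace ℝ (Fin d)

/-- The modified Bessel function of the first kind `I_μ`, defined by its power series
`I_μ(x) = Σ_{k≥0} (x/2)^{2k+μ} / (k! Γ(k+μ+1))`. -/
def besselI (μ : ℝ) (x : ℝ) : ℝ :=
  ∑' k : ℕ, (x / 2) ^ (2 * (k : ℝ) + μ) / ((Nat.factorial k : ℝ) * Real.Gamma (k + μ + 1))

/-- The radial Laplacian in dimension `d`: `Δw(r) = w''(r) + ((d-1)/r) w'(r)`. -/
def radLap (d : ℕ) (w : ℝ → ℝ) (r : ℝ) : ℝ :=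
  deriv (deriv w) r + ((d : ℝ) - 1) / r * deriv w r
/-- The radial function `h_a(r) = (1/√τ)[(I_ν(r√τ)/I_{ν+1}(a√τ))(r/a)^{-ν} - I_ν(a√τ)/I_{ν+1}(a√τ)]`,
with `ν = d/2 - 1`. -/
def hFun (d : ℕ) (a τ r : ℝ) : ℝ :=
  (1 / Real.sqrt τ) *
    ((besselI ((d : ℝ) / 2 - 1) (r * Real.sqrt τ) /
          besselI ((d : ℝ) / 2 - 1 + 1) (a * Real.sqrt τ)) * (r / a) ^ (-((d : ℝ) / 2 - 1)) -
      besselI ((d : ℝ) / 2 - 1) (a * Real.sqrt τ) /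
        besselI ((d : ℝ) / 2 - 1 + 1) (a * Real.sqrt τ))

/-!
Write `I_μ(x) = (x/2)^μ F_μ(x²/4)` with the entire series
`F_μ(t) = Σ tᵏ / (k! Γ(k+μ+1))`, which satisfies `F_μ' = F_{μ+1}` and
`F_μ = (μ+1) F_{μ+1} + t F_{μ+2}`. For `r > 0`, `h_a` is
an affine function of `w(r) = F_ν(τr²/4)`, and with `d = 2ν + 2` the recurrence gives `Δw = τw`
for the radial Laplacian, hence `Δ²h_a - τΔh_a = 0`. The same recurrence shows that
`r^d F_{ν+1}(τr²/4)/2` is a primitive of `r^{d-1} w(r)`, which evaluates the integral in polar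
coordinates. Negativity is `(2ν+2)/x < I_ν(x)/I_{ν+1}(x)`: the difference
`x I_ν(x) - (2ν+2) I_{ν+1}(x)` is a positive multiple of `F_{ν+2}(x²/4)`.
-/

open scoped Nat

def besselISeries (μ t : ℝ) : ℝ := ∑' k : ℕ, t ^ k / (k ! * Gamma (k + μ + 1))

lemma summable_besselISeries (μ t : ℝ) :
    Summable fun k : ℕ => t ^ k / (k ! * Gamma (k + μ + 1)) := by
  refine .of_norm_bounded_eventually (Real.summable_pow_div_factorial |t|) ?_
  rw [Nat.cofinite_eq_atTop]
  filter_upwards [Filter.eventually_ge_atTop ⌈1 - μ⌉₊] with k hk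
  have h2 : 2 ≤ (k : ℝ) + μ + 1 := by linarith [Nat.ceil_le.mp hk]
  have hΓ : 1 ≤ Gamma (k + μ + 1) := by
    simpa [Gamma_two] using Gamma_strictMonoOn_Ici.monotoneOn (mem_Ici.2 le_rfl) h2 h2
  rw [norm_div, norm_mul, norm_pow, Real.norm_eq_abs, Real.norm_natCast,
    Real.norm_of_nonneg (by linarith)]
  gcongr
  exact le_mul_of_one_le_right (by positivity) hΓ

lemma hasDerivAt_besselISeries (μ t : ℝ) :
    HasDerivAt (besselISeries μ) (besselISeries (μ + 1) t) t := by
  set g' : ℕ → ℝ → ℝ := fun k y => k * y ^ (k - 1) / (k ! * Gamma (k + μ + 1))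
  have hg'_succ (k : ℕ) (y : ℝ) :
      g' (k + 1) y = y ^ k / (k ! * Gamma (k + (μ + 1) + 1)) := by
    simp only [g', Nat.factorial_succ, Nat.add_sub_cancel]
    push_cast
    rw [show (k : ℝ) + 1 + μ + 1 = k + (μ + 1) + 1 by ring, mul_assoc,
      mul_div_mul_left _ _ (Nat.cast_add_one_ne_zero k)]
  set R := |t| + 1
  have hbound (k : ℕ) (y : ℝ) (hy : y ∈ ball (0 : ℝ) R) :
      ‖g' k y‖ ≤ ‖g' k R‖ := by
    rw [mem_ball_zero_iff, Real.norm_eq_abs] at hy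
    simp only [g', norm_div, norm_mul, norm_pow]
    gcongr
    rw [Real.norm_of_nonneg (by positivity : (0:ℝ) ≤ R)]
    exact hy.le
  have hsum : Summable fun k => ‖g' k R‖ := by
    rw [← summable_nat_add_iff 1]
    simpa only [hg'_succ] using (summable_besselISeries (μ + 1) R).norm
  have ht : t ∈ ball (0 : ℝ) R := by
    rw [mem_ball_zero_iff, Real.norm_eq_abs]; linarith
  have hderiv := hasDerivAt_tsum_of_isPreconnected hsum isOpen_ball (convex_ball 0 R).isPreconnected
    (fun k y _ => (hasDerivAt_pow k y).div_const _) hbound ht (summable_besselISeries μ t) ht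
  have hsum_t : Summable fun k => g' k t := by
    rw [← summable_nat_add_iff 1]
    simpa only [hg'_succ] using summable_besselISeries (μ + 1) t
  rwa [hsum_t.tsum_eq_zero_add, show g' 0 t = 0 by simp [g'], zero_add,
    tsum_congr (hg'_succ · t)] at hderiv

lemma continuous_besselISeries (μ : ℝ) : Continuous (besselISeries μ) :=
  continuous_iff_continuousAt.2 fun t => (hasDerivAt_besselISeries μ t).continuousAt

lemma besselISeries_pos {μ t : ℝ} (hμ : -1 < μ) (ht : 0 ≤ t) : 0 < besselISeries μ t := by
  have hΓ (k : ℕ) : 0 < Gamma (k + μ + 1) :=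
    Gamma_pos_of_pos (by linarith [k.cast_nonneg (α := ℝ)])
  refine (summable_besselISeries μ t).tsum_pos (fun k => by have := hΓ k; positivity) 0 ?_
  simpa using hΓ 0

lemma besselISeries_eq_add {μ : ℝ} (hμ : -1 < μ) (t : ℝ) :
    besselISeries μ t =
      (μ + 1) * besselISeries (μ + 1) t + t * besselISeries (μ + 1 + 1) t := by
  set c : ℕ → ℝ := fun k => k * t ^ k / (k ! * Gamma (k + (μ + 1) + 1))
  have hterm (k : ℕ) : t ^ k / (k ! * Gamma (k + μ + 1)) =
      (μ + 1) * (t ^ k / (k ! * Gamma (k + (μ + 1) + 1))) + c k := by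
    have hk : 0 < (k : ℝ) + μ + 1 := by linarith [k.cast_nonneg (α := ℝ)]
    have hΓ : 0 < Gamma (k + μ + 1) := Gamma_pos_of_pos hk
    simp only [c, ← add_assoc, Gamma_add_one hk.ne']
    field_simp
    ring
  have hc_succ (k : ℕ) : c (k + 1) = t * (t ^ k / (k ! * Gamma (k + (μ + 1 + 1) + 1))) := by
    simp only [c, Nat.factorial_succ]
    push_cast
    rw [show (k : ℝ) + 1 + (μ + 1) + 1 = k + (μ + 1 + 1) + 1 by ring, pow_succ,
      mul_assoc (k + 1 : ℝ), mul_div_mul_left _ _ (Nat.cast_add_one_ne_zero k)]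
    ring
  have hc : Summable c := by
    rw [← summable_nat_add_iff 1]
    simpa only [hc_succ] using (summable_besselISeries (μ + 1 + 1) t).mul_left t
  rw [besselISeries, tsum_congr hterm,
    Summable.tsum_add ((summable_besselISeries _ t).mul_left _) hc,
    tsum_mul_left, hc.tsum_eq_zero_add, show c 0 = 0 by simp [c], zero_add, tsum_congr hc_succ,
    tsum_mul_left, besselISeries, besselISeries]

lemma besselI_eq_mul_besselISeries (μ : ℝ) {x : ℝ} (hx : 0 < x) :
    besselI μ x = (x / 2) ^ μ * besselISeries μ ((x / 2) ^ 2) := by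
  rw [besselI, besselISeries, ← tsum_mul_left]
  refine tsum_congr fun k => ?_
  rw [rpow_add (by positivity), show 2 * (k : ℝ) = (2 * k : ℕ) by push_cast; ring, rpow_natCast,
    pow_mul]
  ring

lemma besselI_pos {μ x : ℝ} (hμ : -1 < μ) (hx : 0 < x) : 0 < besselI μ x := by
  rw [besselI_eq_mul_besselISeries μ hx]
  exact mul_pos (rpow_pos_of_pos (by positivity) μ) (besselISeries_pos hμ (by positivity))

lemma two_mul_add_one_div_lt_besselI_div {μ x : ℝ} (hμ : -1 < μ) (hx : 0 < x) :
    2 * (μ + 1) / x < besselI μ x / besselI (μ + 1) x := by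
  rw [div_lt_div_iff₀ hx (besselI_pos (by linarith) hx), besselI_eq_mul_besselISeries μ hx,
    besselI_eq_mul_besselISeries _ hx, rpow_add_one (by positivity), besselISeries_eq_add hμ,
    ← sub_pos]
  have hF := besselISeries_pos (by linarith : -1 < μ + 1 + 1) (sq_nonneg (x / 2))
  have hpow := rpow_pos_of_pos (by positivity : 0 < x / 2) μ
  convert mul_pos (mul_pos (mul_pos hx hpow) (by positivity : 0 < (x / 2) ^ 2)) hF using 1
  ring

lemma hasDerivAt_besselISeries_mul_sq (μ c r : ℝ) :
    HasDerivAt (fun r => besselISeries μ (c * r ^ 2))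
      (2 * c * r * besselISeries (μ + 1) (c * r ^ 2)) r := by
  refine ((hasDerivAt_besselISeries μ (c * r ^ 2)).comp r
    ((hasDerivAt_pow 2 r).const_mul c)).congr_deriv ?_
  norm_num
  ring

lemma neg_one_lt_half_sub_one {d : ℕ} (hd : 0 < d) : -1 < (d : ℝ) / 2 - 1 := by
  have : (0 : ℝ) < d := by exact_mod_cast hd
  linarith

lemma radLap_congr {d : ℕ} {f g : ℝ → ℝ} {U : Set ℝ} (hU : IsOpen U) (h : EqOn f g U) :
    EqOn (radLap d f) (radLap d g) U := by
  intro r hr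
  have hfg : f =ᶠ[nhds r] g := Filter.eventuallyEq_of_mem (hU.mem_nhds hr) h
  simp only [radLap, hfg.deriv.deriv_eq, hfg.deriv_eq]

lemma radLap_besselISeries {d : ℕ} (hd : 0 < d) (A B c : ℝ) {r : ℝ} (hr : r ≠ 0) :
    radLap d (fun r => A * besselISeries ((d : ℝ) / 2 - 1) (c * r ^ 2) + B) r =
      4 * c * A * besselISeries ((d : ℝ) / 2 - 1) (c * r ^ 2) := by
  have h1 : deriv (fun r => A * besselISeries ((d : ℝ) / 2 - 1) (c * r ^ 2) + B) =
      fun r => A * (2 * c * r * besselISeries ((d : ℝ) / 2 - 1 + 1) (c * r ^ 2)) :=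
    funext fun r => (((hasDerivAt_besselISeries_mul_sq _ c r).const_mul A).add_const B).deriv
  have h2 := ((hasDerivAt_id' r).const_mul (2 * c) |>.fun_mul
    (hasDerivAt_besselISeries_mul_sq ((d : ℝ) / 2 - 1 + 1) c r)).const_mul A
  have hr' : ((d : ℝ) - 1) / r * r = d - 1 := div_mul_cancel₀ _ hr
  rw [radLap, h1, h2.deriv]
  linear_combination (-4 * c * A) * besselISeries_eq_add (neg_one_lt_half_sub_one hd) (c * r ^ 2)
    + (A * 2 * c * besselISeries ((d : ℝ) / 2 - 1 + 1) (c * r ^ 2)) * hr'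

lemma hasDerivAt_pow_mul_besselISeries {d : ℕ} (hd : 0 < d) (c r : ℝ) :
    HasDerivAt (fun r => r ^ d * besselISeries ((d : ℝ) / 2 - 1 + 1) (c * r ^ 2))
      (2 * r ^ (d - 1) * besselISeries ((d : ℝ) / 2 - 1) (c * r ^ 2)) r := by
  refine ((hasDerivAt_pow d r).fun_mul
    (hasDerivAt_besselISeries_mul_sq _ c r)).congr_deriv ?_
  rw [← pow_sub_one_mul hd.ne' r]
  linear_combination (-2 * r ^ (d - 1)) *
    besselISeries_eq_add (neg_one_lt_half_sub_one hd) (c * r ^ 2)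

theorem setIntegral_ball_fun_norm_addHaar {E F : Type*} [NormedAddCommGroup E] [NormedSpace ℝ E]
    [Nontrivial E] [FiniteDimensional ℝ E] [MeasurableSpace E] [BorelSpace E] (μ : Measure E)
    [μ.IsAddHaarMeasure] [NormedAddCommGroup F] [NormedSpace ℝ F] (f : ℝ → F) {R : ℝ}
    (hR : 0 ≤ R) :
    ∫ x in ball (0 : E) R, f ‖x‖ ∂μ = Module.finrank ℝ E • μ.real (ball 0 1) •
      ∫ r in 0..R, r ^ (Module.finrank ℝ E - 1) • f r := by
  have hind : (ball (0 : E) R).indicator (fun x => f ‖x‖) =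
      fun x => (Iio R).indicator f ‖x‖ := by
    ext x
    by_cases hx : ‖x‖ < R <;> simp [indicator, hx]
  rw [← integral_indicator measurableSet_ball, hind, integral_fun_norm_addHaar,
    intervalIntegral.integral_of_le hR, integral_Ioc_eq_integral_Ioo,
    funext fun y => (indicator_smul_apply (Iio R) (· ^ (Module.finrank ℝ E - 1)) f y).symm,
    setIntegral_indicator measurableSet_Iio, Ioi_inter_Iio]

lemma integral_pow_mul_besselISeries {d : ℕ} (hd : 0 < d) (A B c a : ℝ) :
    ∫ r in 0..a, r ^ (d - 1) * (A * besselISeries ((d : ℝ) / 2 - 1) (c * r ^ 2) + B) =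
      a ^ d * (A / 2 * besselISeries ((d : ℝ) / 2 - 1 + 1) (c * a ^ 2) + B / d) := by
  have hd' : (d : ℝ) ≠ 0 := by exact_mod_cast hd.ne'
  have hderiv (r : ℝ) : HasDerivAt
      (fun r => A / 2 * (r ^ d * besselISeries ((d : ℝ) / 2 - 1 + 1) (c * r ^ 2)) + B / d * r ^ d)
      (r ^ (d - 1) * (A * besselISeries ((d : ℝ) / 2 - 1) (c * r ^ 2) + B)) r := by
    refine (((hasDerivAt_pow_mul_besselISeries hd c r).const_mul (A / 2)).add
      ((hasDerivAt_pow d r).const_mul (B / d))).congr_deriv ?_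
    field_simp
  have hcont := continuous_besselISeries ((d : ℝ) / 2 - 1)
  rw [intervalIntegral.integral_eq_sub_of_hasDerivAt (fun r _ => hderiv r)
    ((by fun_prop : Continuous _).intervalIntegrable _ _)]
  simp [zero_pow hd.ne']
  ring

lemma hFun_eqOn {d : ℕ} {a τ : ℝ} (ha : 0 < a) (hτ : 0 < τ) :
    EqOn (hFun d a τ) (fun r =>
      (√τ * (a * √τ / 2) * besselISeries ((d : ℝ) / 2 - 1 + 1) (τ / 4 * a ^ 2))⁻¹ *
          besselISeries ((d : ℝ) / 2 - 1) (τ / 4 * r ^ 2) +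
        -(besselI ((d : ℝ) / 2 - 1) (a * √τ) / besselI ((d : ℝ) / 2 - 1 + 1) (a * √τ) /
          √τ))
      (Ioi 0) := by
  intro r (hr : 0 < r)
  set ν := (d : ℝ) / 2 - 1
  have hs : 0 < √τ := sqrt_pos.2 hτ
  have hsq (x : ℝ) : (x * √τ / 2) ^ 2 = τ / 4 * x ^ 2 := by
    rw [div_pow, mul_pow, sq_sqrt hτ.le]; ring
  have hscale : (r * √τ / 2) ^ ν * (r / a) ^ (-ν) = (a * √τ / 2) ^ ν := by
    rw [mul_div_assoc, mul_div_assoc, mul_rpow hr.le (by positivity),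
      mul_rpow ha.le (by positivity),
      rpow_neg (by positivity), div_rpow hr.le ha.le]
    have := rpow_pos_of_pos hr ν
    field_simp
  have hfirst : besselI ν (r * √τ) / besselI (ν + 1) (a * √τ) * (r / a) ^ (-ν) =
      besselISeries ν (τ / 4 * r ^ 2) /
        (a * √τ / 2 * besselISeries (ν + 1) (τ / 4 * a ^ 2)) := by
    rw [besselI_eq_mul_besselISeries _ (by positivity),
      besselI_eq_mul_besselISeries _ (by positivity),
      hsq, hsq, rpow_add_one (by positivity), ← hscale]
    have := rpow_pos_of_pos (by positivity : 0 < a * √τ / 2) ν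
    have := rpow_pos_of_pos (by positivity : 0 < r * √τ / 2) ν
    field_simp
  rw [hFun, hfirst]
  ring

lemma radLap_radLap_hFun_sub_eq_zero {d : ℕ} (hd : 0 < d) {a τ : ℝ} (ha : 0 < a) (hτ : 0 < τ)
    {r : ℝ} (hr : 0 < r) :
    radLap d (radLap d (hFun d a τ)) r - τ * radLap d (hFun d a τ) r = 0 := by
  obtain ⟨A, B, h⟩ : ∃ A B, EqOn (hFun d a τ)
      (fun r => A * besselISeries ((d : ℝ) / 2 - 1) (τ / 4 * r ^ 2) + B) (Ioi 0) :=
    ⟨_, _, hFun_eqOn ha hτ⟩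
  have hΔ : EqOn (radLap d (hFun d a τ))
      (fun r => τ * A * besselISeries ((d : ℝ) / 2 - 1) (τ / 4 * r ^ 2) + 0) (Ioi 0) := by
    intro r (hr : 0 < r)
    rw [radLap_congr isOpen_Ioi h hr, radLap_besselISeries hd A B _ hr.ne']
    ring
  rw [radLap_congr isOpen_Ioi hΔ hr, radLap_besselISeries hd _ _ _ hr.ne', hΔ hr]
  ring

lemma hFun_self (d : ℕ) {a : ℝ} (ha : a ≠ 0) (τ : ℝ) : hFun d a τ a = 0 := by
  rw [hFun, div_self ha, one_rpow, mul_one, sub_self, mul_zero]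

lemma deriv_hFun_self (d : ℕ) {a τ : ℝ} (ha : 0 < a) (hτ : 0 < τ) :
    deriv (hFun d a τ) a = 1 := by
  rw [(Filter.eventuallyEq_of_mem (isOpen_Ioi.mem_nhds ha) (hFun_eqOn ha hτ)).deriv_eq,
    (((hasDerivAt_besselISeries_mul_sq _ _ a).const_mul _).add_const _).deriv]
  have hF := besselISeries_pos (μ := (d : ℝ) / 2 - 1 + 1)
    (by linarith [d.cast_nonneg (α := ℝ)]) (t := τ / 4 * a ^ 2) (by positivity) |>.ne'
  generalize besselISeries ((d : ℝ) / 2 - 1 + 1) (τ / 4 * a ^ 2) = F at hF ⊢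
  have hs : 0 < √τ := sqrt_pos.2 hτ
  field_simp
  rw [sq_sqrt hτ.le]
  ring

lemma setIntegral_ball_hFun {d : ℕ} (hd : 0 < d) {a τ : ℝ} (ha : 0 < a) (hτ : 0 < τ) :
    ∫ x in ball (0 : Euc d) a, hFun d a τ ‖x‖ =
      a ^ d * ((volume (ball (0 : Euc d) 1)).toReal / √τ) *
        ((d : ℝ) / (a * √τ) - besselI ((d : ℝ) / 2 - 1) (a * √τ) /
          besselI ((d : ℝ) / 2 - 1 + 1) (a * √τ)) := by
  have : Nonempty (Fin d) := ⟨⟨0, hd⟩⟩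
  rw [setIntegral_ball_fun_norm_addHaar volume _ ha.le, finrank_euclideanSpace_fin,
    intervalIntegral.integral_congr_ae (g := fun r => r ^ (d - 1) * _)
      (Filter.Eventually.of_forall fun r hr => by
        rw [uIoc_of_le ha.le] at hr
        rw [smul_eq_mul, hFun_eqOn ha hτ hr.1]),
    integral_pow_mul_besselISeries hd]
  have hF := besselISeries_pos (μ := (d : ℝ) / 2 - 1 + 1)
    (by linarith [d.cast_nonneg (α := ℝ)]) (t := τ / 4 * a ^ 2) (by positivity) |>.ne'
  generalize besselISeries ((d : ℝ) / 2 - 1 + 1) (τ / 4 * a ^ 2) = F at hF ⊢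
  have hs : 0 < √τ := sqrt_pos.2 hτ
  have hd' : (d : ℝ) ≠ 0 := by exact_mod_cast hd.ne'
  simp only [nsmul_eq_mul, smul_eq_mul, Measure.real]
  field_simp
  ring

/-- `h_a` solves `Δ²h_a - τΔh_a = 0` in `B_a` with `h_a = 0`, `∂_n h_a = 1` on `∂B_a`;
its integral equals `a^d (|B₁|/√τ)(d/(a√τ) - I_ν(a√τ)/I_{ν+1}(a√τ))`, and this
quantity is negative. -/
theorem hFun_integral (d : ℕ) (hd : 2 ≤ d) (a τ : ℝ) (ha : 0 < a) (hτ : 0 < τ) :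
    (∀ r ∈ Ioo (0 : ℝ) a,
        radLap d (radLap d (hFun d a τ)) r - τ * radLap d (hFun d a τ) r = 0) ∧
      hFun d a τ a = 0 ∧ deriv (hFun d a τ) a = 1 ∧
      (∫ x in ball (0 : Euc d) a, hFun d a τ ‖x‖) =
        a ^ (d : ℕ) * ((volume (ball (0 : Euc d) 1)).toReal / Real.sqrt τ) *
          ((d : ℝ) / (a * Real.sqrt τ) -
            besselI ((d : ℝ) / 2 - 1) (a * Real.sqrt τ) /
              besselI ((d : ℝ) / 2 - 1 + 1) (a * Real.sqrt τ)) ∧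
      a ^ (d : ℕ) * ((volume (ball (0 : Euc d) 1)).toReal / Real.sqrt τ) *
          ((d : ℝ) / (a * Real.sqrt τ) -
            besselI ((d : ℝ) / 2 - 1) (a * Real.sqrt τ) /
              besselI ((d : ℝ) / 2 - 1 + 1) (a * Real.sqrt τ)) < 0 := by
  have hd0 : 0 < d := by omega
  have hball : 0 < (volume (ball (0 : Euc d) 1)).toReal :=
    ENNReal.toReal_pos (measure_ball_pos _ _ one_pos).ne' measure_ball_lt_top.ne
  have hratio := two_mul_add_one_div_lt_besselI_div (neg_one_lt_half_sub_one hd0)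
    (by positivity : 0 < a * √τ)
  rw [show 2 * ((d : ℝ) / 2 - 1 + 1) = d by ring] at hratio
  refine ⟨fun r hr => radLap_radLap_hFun_sub_eq_zero hd0 ha hτ hr.1, hFun_self d ha.ne' τ,
    deriv_hFun_self d ha hτ, setIntegral_ball_hFun hd0 ha hτ, ?_⟩
  exact mul_neg_of_pos_of_neg (mul_pos (pow_pos ha d) (div_pos hball (sqrt_pos.2 hτ)))
    (sub_neg.2 hratio)
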